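/- arXiv:1805.07562 — 3 statements merged into one kernel-verified Lean document; each statement's English description precedes it below -/
import Mathlib

section
/- Let H be a separable real Hilbert space, and let (T_n) be a sequence of bounded linear operators on H that converges to the identity in the strong operator topology. Suppose V is a reflexive Banach space densely and compactly embedded in H, and suppose the extensions of T_n to V' satisfy sup_n ‖T_n‖_{L(V')} < ∞. Then the sequence of adjoint operators (T_n^*) maps V into V with ‖T_n^* x‖_V ≤ N ‖x‖_V for N = sup_n ‖T_n‖_{L(V')}, and T_n^* converges to the identity in the strong operator topology of H. -/
/-!
Since `V` is a Hilbert space, the transpose of `Sₙ` maps `V ≅ V''` into itself with norm at most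
`N`, and on `i V` it agrees with `Tₙ*`; this gives the bound. The vectors `Tₙ* (i v)` therefore
lie in the image under `i` of a ball, which is relatively compact, and they converge weakly to
`i v` because `⟪Tₙ* y, h⟫ = ⟪y, Tₙ h⟫`; on a compact set weak convergence is strong convergence.
By Banach–Steinhaus the `‖Tₙ*‖ = ‖Tₙ‖` are bounded, so convergence on the dense range of `i`
extends to all of `H`.
-/

open Filter Topology RealInnerProductSpace

theorem tendsto_of_isCompact_of_tendsto_inner {𝕜 E ι : Type*} [RCLike 𝕜] [NormedAddCommGroup E]
    [InnerProductSpace 𝕜 E] {l : Filter ι} {K : Set E} (hK : IsCompact K) {y : ι → E} {x : E}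
    (hyK : ∀ᶠ n in l, y n ∈ K)
    (hweak : ∀ h : E, Tendsto (fun n => inner 𝕜 (y n) h) l (𝓝 (inner 𝕜 x h))) :
    Tendsto y l (𝓝 x) := by
  refine hK.tendsto_nhds_of_unique_mapClusterPt hyK fun z _ hz => ext_inner_right 𝕜 fun h => ?_
  have hzh : MapClusterPt (inner 𝕜 z h) l (fun n => inner 𝕜 (y n) h) :=
    hz.continuousAt_comp (continuous_id.inner continuous_const).continuousAt
  exact eq_of_nhds_neBot (ClusterPt.mono hzh (hweak h))

theorem tendsto_of_denseRange_of_norm_le {ι 𝕜 E F : Type*} [NontriviallyNormedField 𝕜]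
    [NormedAddCommGroup E] [NormedSpace 𝕜 E] [TopologicalSpace F] {l : Filter ι}
    {A : ι → E →L[𝕜] E} {C : ℝ} (hA : ∀ n, ‖A n‖ ≤ C) {j : F → E} (hj : DenseRange j)
    (hAj : ∀ v, Tendsto (fun n => A n (j v)) l (𝓝 (j v))) (x : E) :
    Tendsto (fun n => A n x) l (𝓝 x) := by
  have hequi : Equicontinuous (DFunLike.coe ∘ A) :=
    ((NormedSpace.equicontinuous_TFAE A).out 5 1).mp (⟨C, hA⟩ : ∃ C, ∀ n, ‖A n‖ ≤ C)
  have hclosed : IsClosed {x | Tendsto (fun n => A n x) l (𝓝 x)} :=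
    hequi.isClosed_setOfPred_tendsto continuous_id
  exact hclosed.closure_subset_iff.mpr (Set.range_subset_iff.mpr hAj) (hj x)

theorem ContinuousLinearMap.tendsto_inner_adjoint_apply {ι 𝕜 E : Type*} [RCLike 𝕜]
    [NormedAddCommGroup E] [InnerProductSpace 𝕜 E] [CompleteSpace E] {l : Filter ι}
    {T : ι → E →L[𝕜] E} (hT : ∀ x, Tendsto (fun n => T n x) l (𝓝 x)) (y h : E) :
    Tendsto (fun n => inner 𝕜 (adjoint (T n) y) h) l (𝓝 (inner 𝕜 y h)) := by
  simpa only [adjoint_inner_left] using tendsto_const_nhds.inner (hT h)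

theorem InnerProductSpace.exists_forall_dual_apply_eq {V : Type*} [NormedAddCommGroup V]
    [InnerProductSpace ℝ V] [CompleteSpace V]
    (S : StrongDual ℝ V →L[ℝ] StrongDual ℝ V) (v : V) :
    ∃ w : V, (∀ f : StrongDual ℝ V, f w = S f v) ∧ ‖w‖ ≤ ‖S‖ * ‖v‖ := by
  let D := (toDual ℝ V).toContinuousLinearEquiv.toContinuousLinearMap
  let g : StrongDual ℝ V := ContinuousLinearMap.apply ℝ ℝ v ∘L S ∘L D
  refine ⟨(toDual ℝ V).symm g, fun f => ?_, ?_⟩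
  · obtain ⟨u, rfl⟩ := (toDual ℝ V).surjective f
    rw [toDual_apply_apply, real_inner_comm, ← toDual_apply_apply,
      LinearIsometryEquiv.apply_symm_apply]
    rfl
  · rw [LinearIsometryEquiv.norm_map]
    refine ContinuousLinearMap.opNorm_le_bound _ (by positivity) fun u => ?_
    calc ‖S (toDual ℝ V u) v‖ ≤ ‖S‖ * ‖toDual ℝ V u‖ * ‖v‖ := S.le_opNorm₂ _ _
      _ = ‖S‖ * ‖v‖ * ‖u‖ := by rw [LinearIsometryEquiv.norm_map]; ring

theorem adjoint_apply_eq_of_dual_extension {H V : Type*} [NormedAddCommGroup H]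
    [InnerProductSpace ℝ H] [CompleteSpace H] [NormedAddCommGroup V] [NormedSpace ℝ V]
    {i : V →L[ℝ] H} {e : H →L[ℝ] StrongDual ℝ V} (he : ∀ (h : H) (v : V), e h v = ⟪i v, h⟫)
    {T : H →L[ℝ] H} {S : StrongDual ℝ V →L[ℝ] StrongDual ℝ V} (hext : ∀ h, S (e h) = e (T h))
    {v w : V} (hw : ∀ f : StrongDual ℝ V, f w = S f v) :
    i w = ContinuousLinearMap.adjoint T (i v) :=
  ext_inner_right ℝ fun h => by
    rw [← he, hw, hext, he, ContinuousLinearMap.adjoint_inner_left]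

theorem stmt_0_general
    {H V : Type*}
    [NormedAddCommGroup H] [InnerProductSpace ℝ H] [CompleteSpace H]
    [NormedAddCommGroup V] [InnerProductSpace ℝ V] [CompleteSpace V]
    (i : V →L[ℝ] H) (hi_dense : DenseRange i)
    (hi_compact : IsCompactOperator i)
    -- the embedding `H ↪ V'` of the Gelfand triple
    (e : H →L[ℝ] (V →L[ℝ] ℝ)) (he : ∀ (h : H) (v : V), e h v = ⟪i v, h⟫)
    (T : ℕ → H →L[ℝ] H)
    (hT : ∀ x : H, Tendsto (fun n => T n x) atTop (𝓝 x))
    -- the extensions of `Tₙ` to `V'`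
    (S : ℕ → (V →L[ℝ] ℝ) →L[ℝ] (V →L[ℝ] ℝ))
    (hext : ∀ n (h : H), S n (e h) = e (T n h))
    (N : ℝ) (hN : ∀ n, ‖S n‖ ≤ N) :
    (∀ n (v : V), ∃ w : V,
        i w = ContinuousLinearMap.adjoint (T n) (i v) ∧ ‖w‖ ≤ N * ‖v‖) ∧
      ∀ x : H, Tendsto (fun n => ContinuousLinearMap.adjoint (T n) x) atTop (𝓝 x) := by
  have hV : ∀ n (v : V), ∃ w : V,
      i w = ContinuousLinearMap.adjoint (T n) (i v) ∧ ‖w‖ ≤ N * ‖v‖ := fun n v => by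
    obtain ⟨w, hw, hwv⟩ := InnerProductSpace.exists_forall_dual_apply_eq (S n) v
    exact ⟨w, adjoint_apply_eq_of_dual_extension he (hext n) hw,
      hwv.trans (mul_le_mul_of_nonneg_right (hN n) (norm_nonneg v))⟩
  refine ⟨hV, ?_⟩
  obtain ⟨C, hC⟩ : ∃ C, ∀ n, ‖T n‖ ≤ C :=
    banach_steinhaus fun x =>
      let ⟨c, hc⟩ := (hT x).norm.bddAbove_range
      ⟨c, fun n => hc ⟨n, rfl⟩⟩
  refine tendsto_of_denseRange_of_norm_le
    (fun n => ((ContinuousLinearMap.adjoint).norm_map (T n)).trans_le (hC n)) hi_dense fun v => ?_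
  have hK : IsCompact (closure (i '' Metric.closedBall 0 (N * ‖v‖))) :=
    hi_compact.isCompact_closure_image_of_bounded Metric.isBounded_closedBall
  refine tendsto_of_isCompact_of_tendsto_inner hK (Eventually.of_forall fun n => ?_)
    (ContinuousLinearMap.tendsto_inner_adjoint_apply hT (i v))
  obtain ⟨w, hw, hwv⟩ := hV n v
  exact subset_closure ⟨w, mem_closedBall_zero_iff.mpr hwv, hw⟩

/-- the adjoints `Tₙ*` map `V` into `V` with `‖Tₙ* x‖_V ≤ N ‖x‖_V`,
and converge to the identity in the strong operator topology of `H`. -/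
theorem stmt_0
    {H V : Type*}
    [NormedAddCommGroup H] [InnerProductSpace ℝ H] [CompleteSpace H]
    [TopologicalSpace.SeparableSpace H]
    [NormedAddCommGroup V] [InnerProductSpace ℝ V] [CompleteSpace V]
    (i : V →L[ℝ] H) (hi_inj : Function.Injective i) (hi_dense : DenseRange i)
    (hi_compact : IsCompactOperator i)
    -- the embedding `H ↪ V'` of the Gelfand triple
    (e : H →L[ℝ] (V →L[ℝ] ℝ)) (he : ∀ (h : H) (v : V), e h v = ⟪i v, h⟫)
    (T : ℕ → H →L[ℝ] H)
    (hT : ∀ x : H, Tendsto (fun n => T n x) atTop (𝓝 x))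
    -- the extensions of `Tₙ` to `V'`
    (S : ℕ → (V →L[ℝ] ℝ) →L[ℝ] (V →L[ℝ] ℝ))
    (hext : ∀ n (h : H), S n (e h) = e (T n h))
    (N : ℝ) (hN : ∀ n, ‖S n‖ ≤ N) :
    (∀ n (v : V), ∃ w : V,
        i w = ContinuousLinearMap.adjoint (T n) (i v) ∧ ‖w‖ ≤ N * ‖v‖) ∧
      ∀ x : H, Tendsto (fun n => ContinuousLinearMap.adjoint (T n) x) atTop (𝓝 x) :=
  stmt_0_general i hi_dense hi_compact e he T hT S hext N hN
end

section
/- Let E be a reflexive Banach space densely and continuously embedded in a Banach space F. If u : [0,T] → F is weakly càdlàg with values in F, u ∈ L^∞(0,T;E), and u(T) ∈ E, and if moreover there exists a constant M such that ‖u(t)‖_E ≤ M for all t ∈ [0,T], then u is weakly càdlàg as an E-valued function: for every t ∈ [0,T) and every sequence t_n ↓ t, u(t_n) → u(t) weakly in E, and for every t ∈ (0,T] left limits exist weakly in E. -/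
/-!
Evaluation identifies `E` with its bidual, so the maps `ψ ↦ ψ (u s)` lie in the image of a closed
ball of `E''`, which is compact for pointwise convergence on `E'` (Banach–Alaoglu). Along the
one-sided neighbourhood filters `u` therefore has weak cluster points, all of the form `x ∈ E`.
Testing against the functionals `φ ∘ j` shows that `j x` is the weak limit of `j ∘ u` in `F`, so by
injectivity of `j` the cluster point is unique, and a filter in a compact set with a unique cluster
point converges.
-/

open Filter Topology Metric NormedSpace

section WeakLimits

variable {𝕜 E F α : Type*} [RCLike 𝕜]
    [NormedAddCommGroup E] [NormedSpace 𝕜 E] [NormedAddCommGroup F] [NormedSpace 𝕜 F]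
    {l : Filter α}

theorem isCompact_image_coe_closedBall_strongDual {V : Type*} [NormedAddCommGroup V]
    [NormedSpace 𝕜 V] (M : ℝ) :
    IsCompact (((⇑) : StrongDual 𝕜 V → V → 𝕜) '' closedBall 0 M) :=
  ContinuousLinearMap.isCompact_image_coe_of_bounded_of_weak_closed isBounded_closedBall
    (ContinuousLinearMap.is_weak_closed_closedBall 0 M)

theorem MapClusterPt.eq_of_tendsto_apply {u : α → E} {x : E} {ψ : StrongDual 𝕜 E} {c : 𝕜}
    (hx : MapClusterPt (fun ψ : StrongDual 𝕜 E => ψ x) l (fun a ψ => ψ (u a)))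
    (hψ : Tendsto (fun a => ψ (u a)) l (𝓝 c)) : ψ x = c :=
  eq_of_nhds_neBot ((hx.tendsto_comp (continuous_apply ψ).continuousAt).clusterPt.mono hψ).neBot

theorem exists_forall_tendsto_dual_of_injective
    (hrefl : Function.Surjective (inclusionInDoubleDual 𝕜 E))
    {j : E →L[𝕜] F} (hj : Function.Injective j) [l.NeBot] {u : α → E} {M : ℝ}
    (hu : ∀ᶠ a in l, ‖u a‖ ≤ M)
    (h : ∀ φ : StrongDual 𝕜 F, ∃ c, Tendsto (fun a => φ (j (u a))) l (𝓝 c)) :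
    ∃ x : E, ∀ ψ : StrongDual 𝕜 E, Tendsto (fun a => ψ (u a)) l (𝓝 (ψ x)) := by
  set K := ((⇑) : StrongDual 𝕜 (StrongDual 𝕜 E) → StrongDual 𝕜 E → 𝕜) '' closedBall 0 M
  have hK : IsCompact K := isCompact_image_coe_closedBall_strongDual M
  have hmem : ∀ᶠ a in l, (fun ψ : StrongDual 𝕜 E => ψ (u a)) ∈ K := by
    filter_upwards [hu] with a ha
    refine ⟨inclusionInDoubleDual 𝕜 E (u a), ?_, rfl⟩
    exact (dist_zero_right (inclusionInDoubleDual 𝕜 E (u a))).trans_le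
      ((double_dual_bound 𝕜 E (u a)).trans ha)
  have hK_eval : ∀ g ∈ K, ∃ x : E, g = fun ψ => ψ x := by
    rintro _ ⟨Φ, -, rfl⟩
    obtain ⟨x, rfl⟩ := hrefl Φ
    exact ⟨x, rfl⟩
  obtain ⟨g, hgK, hg⟩ := hK.exists_mapClusterPt (tendsto_principal.2 hmem)
  obtain ⟨x, rfl⟩ := hK_eval g hgK
  suffices Tendsto (fun a ψ => ψ (u a)) l (𝓝 fun ψ : StrongDual 𝕜 E => ψ x) from
    ⟨x, tendsto_pi_nhds.1 this⟩
  refine hK.tendsto_nhds_of_unique_mapClusterPt hmem fun g' hg'K hg' => ?_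
  obtain ⟨y, rfl⟩ := hK_eval g' hg'K
  suffices y = x by rw [this]
  refine hj ((SeparatingDual.eq_iff_forall_dual_eq (R := 𝕜)).2 fun φ => ?_)
  obtain ⟨c, hc⟩ := h φ
  exact (hg'.eq_of_tendsto_apply (ψ := φ.comp j) hc).trans
    (hg.eq_of_tendsto_apply (ψ := φ.comp j) hc).symm

theorem tendsto_dual_of_injective
    (hrefl : Function.Surjective (inclusionInDoubleDual 𝕜 E))
    {j : E →L[𝕜] F} (hj : Function.Injective j) [l.NeBot] {u : α → E} {M : ℝ}
    (hu : ∀ᶠ a in l, ‖u a‖ ≤ M) {y : E}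
    (h : ∀ φ : StrongDual 𝕜 F, Tendsto (fun a => φ (j (u a))) l (𝓝 (φ (j y))))
    (ψ : StrongDual 𝕜 E) : Tendsto (fun a => ψ (u a)) l (𝓝 (ψ y)) := by
  obtain ⟨x, hx⟩ := exists_forall_tendsto_dual_of_injective hrefl hj hu fun φ => ⟨_, h φ⟩
  have hxy : x = y := hj <| (SeparatingDual.eq_iff_forall_dual_eq (R := 𝕜)).2 fun φ =>
    tendsto_nhds_unique (hx (φ.comp j)) (h φ)
  exact hxy ▸ hx ψ

end WeakLimits

theorem stmt_1_general
    {E F : Type*}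
    [NormedAddCommGroup E] [NormedSpace ℝ E]
    [NormedAddCommGroup F] [NormedSpace ℝ F]
    (hrefl : Function.Surjective (NormedSpace.inclusionInDoubleDual ℝ E))
    (j : E →L[ℝ] F) (hj_inj : Function.Injective j)
    (T : ℝ)
    (u : ℝ → E) (M : ℝ) (hM : ∀ t ∈ Set.Icc (0 : ℝ) T, ‖u t‖ ≤ M)
    -- `u` is weakly càdlàg with values in `F`
    (hcadF : ∀ φ : F →L[ℝ] ℝ,
      (∀ t ∈ Set.Ico (0 : ℝ) T, Tendsto (fun s => φ (j (u s)))
          (𝓝[Set.Ioc t T] t) (𝓝 (φ (j (u t))))) ∧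
      (∀ t ∈ Set.Ioc (0 : ℝ) T, ∃ l : ℝ, Tendsto (fun s => φ (j (u s)))
          (𝓝[Set.Ico 0 t] t) (𝓝 l))) :
    -- `u` is weakly càdlàg with values in `E`
    (∀ t ∈ Set.Ico (0 : ℝ) T, ∀ ψ : E →L[ℝ] ℝ,
        Tendsto (fun s => ψ (u s)) (𝓝[Set.Ioc t T] t) (𝓝 (ψ (u t)))) ∧
      ∀ t ∈ Set.Ioc (0 : ℝ) T, ∃ l : E, ∀ ψ : E →L[ℝ] ℝ,
        Tendsto (fun s => ψ (u s)) (𝓝[Set.Ico 0 t] t) (𝓝 (ψ l)) := by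
  have hbdd : ∀ {s : Set ℝ}, s ⊆ Set.Icc 0 T → ∀ t, ∀ᶠ a in 𝓝[s] t, ‖u a‖ ≤ M :=
    fun hs _ => eventually_nhdsWithin_of_forall fun a ha => hM a (hs ha)
  refine ⟨fun t ht => ?_, fun t ht => ?_⟩
  · have := left_nhdsWithin_Ioc_neBot ht.2
    exact tendsto_dual_of_injective hrefl hj_inj
      (hbdd (Set.Ioc_subset_Icc_self.trans (Set.Icc_subset_Icc_left ht.1)) t)
      fun φ => (hcadF φ).1 t ht
  · have := right_nhdsWithin_Ico_neBot ht.1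
    exact exists_forall_tendsto_dual_of_injective hrefl hj_inj
      (hbdd (Set.Ico_subset_Icc_self.trans (Set.Icc_subset_Icc_right ht.2)) t)
      fun φ => (hcadF φ).2 t ht

/-- if `u` is weakly càdlàg with values in `F` and uniformly bounded in the
`E`-norm, then `u` is weakly càdlàg with values in `E`. Reflexivity of `E` is encoded as
surjectivity of the canonical inclusion into the double dual. -/
theorem stmt_1
    {E F : Type*}
    [NormedAddCommGroup E] [NormedSpace ℝ E]
    [NormedAddCommGroup F] [NormedSpace ℝ F]
    (hrefl : Function.Surjective (NormedSpace.inclusionInDoubleDual ℝ E))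
    (j : E →L[ℝ] F) (hj_inj : Function.Injective j) (hj_dense : DenseRange j)
    (T : ℝ) (hT : 0 < T)
    (u : ℝ → E) (M : ℝ) (hM : ∀ t ∈ Set.Icc (0 : ℝ) T, ‖u t‖ ≤ M)
    -- `u` is weakly càdlàg with values in `F`
    (hcadF : ∀ φ : F →L[ℝ] ℝ,
      (∀ t ∈ Set.Ico (0 : ℝ) T, Tendsto (fun s => φ (j (u s)))
          (𝓝[Set.Ioc t T] t) (𝓝 (φ (j (u t))))) ∧
      (∀ t ∈ Set.Ioc (0 : ℝ) T, ∃ l : ℝ, Tendsto (fun s => φ (j (u s)))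
          (𝓝[Set.Ico 0 t] t) (𝓝 l))) :
    -- `u` is weakly càdlàg with values in `E`
    (∀ t ∈ Set.Ico (0 : ℝ) T, ∀ ψ : E →L[ℝ] ℝ,
        Tendsto (fun s => ψ (u s)) (𝓝[Set.Ioc t T] t) (𝓝 (ψ (u t)))) ∧
      ∀ t ∈ Set.Ioc (0 : ℝ) T, ∃ l : E, ∀ ψ : E →L[ℝ] ℝ,
        Tendsto (fun s => ψ (u s)) (𝓝[Set.Ico 0 t] t) (𝓝 (ψ l)) :=
  stmt_1_general hrefl j hj_inj T u M hM hcadF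
end

section
/- Let E be a reflexive Banach space densely and continuously embedded in a Banach space F. Then L^∞(0,T;E) ∩ D_w([0,T];F) = D_w([0,T];E), i.e., a function u: [0,T] → F that is weakly càdlàg in F and essentially bounded with values in E (after possibly modifying its value at T so that u(T) ∈ E) is weakly càdlàg with values in E; in particular its range u([0,T]) is bounded in E. -/
/-!
Along a one-sided neighbourhood filter of `t`, every `φ (u s)` with `φ ∈ F*` converges, and `u`
stays in the image of an `E`-ball outside a null set, hence frequently to the right of each
`t < T`. In the weak-* topology of the bidual such a family clusters in a closed ball
(Banach–Alaoglu); reflexivity puts each cluster point in `E`, and since the functionals `φ ∘ j`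
separate the points of `E`, the limits of `φ (u s)` single out one cluster point. So the family
converges weakly in `E`. This places `u t` in `j (closedBall 0 M)` for `t < T`, and yields weak
right continuity and left limits in `E`.
-/

open Filter Topology MeasureTheory

open NormedSpace Set

theorem eq_of_mapClusterPt_of_tendsto {α X Y : Type*} [TopologicalSpace X] [TopologicalSpace Y]
    [T2Space Y] {L : Filter α} {x : α → X} {b : X} {g : X → Y} {c : Y}
    (hb : MapClusterPt b L x) (hg : ContinuousAt g b) (hc : Tendsto (g ∘ x) L (𝓝 c)) :
    g b = c :=
  eq_of_nhds_neBot ((hb.continuousAt_comp hg).clusterPt.mono hc).neBot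

section Reflexive

variable {𝕜 E F α : Type*} [RCLike 𝕜] [NormedAddCommGroup E] [NormedSpace 𝕜 E]
  [NormedAddCommGroup F] [NormedSpace 𝕜 F] {L : Filter α}

theorem exists_eq_inclusionInDoubleDual_of_norm_le
    (hrefl : Function.Surjective (inclusionInDoubleDual 𝕜 E)) {M : ℝ}
    {b : WeakDual 𝕜 (StrongDual 𝕜 E)}
    (hb : b ∈ WeakDual.toStrongDual ⁻¹' Metric.closedBall 0 M) :
    ∃ w : E, ‖w‖ ≤ M ∧ b = StrongDual.toWeakDual (inclusionInDoubleDual 𝕜 E w) := by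
  obtain ⟨w, hw⟩ := hrefl (WeakDual.toStrongDual b)
  refine ⟨w, ?_, by rw [hw]; rfl⟩
  have hbM : ‖inclusionInDoubleDual 𝕜 E w‖ ≤ M :=
    hw ▸ (dist_zero_right (WeakDual.toStrongDual b)).symm.trans_le hb
  exact ((inclusionInDoubleDualLi 𝕜).norm_map w).symm.trans_le hbM

theorem exists_tendsto_weak_of_eventually_norm_le
    (hrefl : Function.Surjective (inclusionInDoubleDual 𝕜 E))
    {j : E →L[𝕜] F} (hj : Function.Injective j) [L.NeBot] {v : α → E} {M : ℝ}
    (hv : ∀ᶠ s in L, ‖v s‖ ≤ M)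
    (h : ∀ φ : StrongDual 𝕜 F, ∃ c, Tendsto (fun s => φ (j (v s))) L (𝓝 c)) :
    ∃ v₀ : E, ‖v₀‖ ≤ M ∧ ∀ ψ : StrongDual 𝕜 E, Tendsto (fun s => ψ (v s)) L (𝓝 (ψ v₀)) := by
  choose c hc using h
  set ι := fun w : E => StrongDual.toWeakDual (inclusionInDoubleDual 𝕜 E w)
  set K := WeakDual.toStrongDual ⁻¹' Metric.closedBall (0 : StrongDual 𝕜 (StrongDual 𝕜 E)) M
  have hK : IsCompact K := WeakDual.isCompact_closedBall 0 M
  have hvK : ∀ᶠ s in L, ι (v s) ∈ K :=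
    hv.mono fun s hs => (dist_zero_right (inclusionInDoubleDual 𝕜 E (v s))).trans_le
      ((double_dual_bound 𝕜 E _).trans hs)
  have hcluster : ∀ b ∈ K, MapClusterPt b L (ι ∘ v) →
      ∃ w : E, ‖w‖ ≤ M ∧ b = ι w ∧ ∀ φ, φ (j w) = c φ := by
    intro b hbK hb
    obtain ⟨w, hwM, rfl⟩ := exists_eq_inclusionInDoubleDual_of_norm_le hrefl hbK
    exact ⟨w, hwM, rfl, fun φ =>
      eq_of_mapClusterPt_of_tendsto (g := fun a : WeakDual 𝕜 (StrongDual 𝕜 E) => a (φ.comp j)) hb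
        (WeakDual.eval_continuous _).continuousAt (hc φ)⟩
  obtain ⟨_, haK, ha⟩ := hK.exists_mapClusterPt_of_frequently hvK.frequently
  obtain ⟨w₀, hw₀M, -, hw₀⟩ := hcluster _ haK ha
  have hlim : Tendsto (ι ∘ v) L (𝓝 (ι w₀)) := by
    refine hK.tendsto_nhds_of_unique_mapClusterPt hvK fun b hbK hb => ?_
    obtain ⟨w, -, rfl, hw⟩ := hcluster b hbK hb
    rw [hj (SeparatingDual.eq_iff_forall_dual_eq.2 fun φ => (hw φ).trans (hw₀ φ).symm)]
  exact ⟨w₀, hw₀M, fun ψ => ((WeakDual.eval_continuous ψ).tendsto _).comp hlim⟩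

theorem apply_eq_of_tendsto_weak [L.NeBot] (j : E →L[𝕜] F) {v : α → E} {v₀ : E} {y : F}
    (hv₀ : ∀ ψ : StrongDual 𝕜 E, Tendsto (fun s => ψ (v s)) L (𝓝 (ψ v₀)))
    (hy : ∀ φ : StrongDual 𝕜 F, Tendsto (fun s => φ (j (v s))) L (𝓝 (φ y))) : j v₀ = y :=
  SeparatingDual.eq_iff_forall_dual_eq.2 fun φ => tendsto_nhds_unique (hv₀ (φ.comp j)) (hy φ)

theorem tendsto_weak_of_tendsto_comp (hrefl : Function.Surjective (inclusionInDoubleDual 𝕜 E))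
    {j : E →L[𝕜] F} (hj : Function.Injective j) [L.NeBot] {v : α → E} {x : E} {M : ℝ}
    (hv : ∀ᶠ s in L, ‖v s‖ ≤ M)
    (hx : ∀ φ : StrongDual 𝕜 F, Tendsto (fun s => φ (j (v s))) L (𝓝 (φ (j x))))
    (ψ : StrongDual 𝕜 E) : Tendsto (fun s => ψ (v s)) L (𝓝 (ψ x)) := by
  obtain ⟨v₀, -, hv₀⟩ :=
    exists_tendsto_weak_of_eventually_norm_le hrefl hj hv fun φ => ⟨_, hx φ⟩
  rw [← hj (apply_eq_of_tendsto_weak j hv₀ hx)]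
  exact hv₀ ψ

theorem exists_apply_eq_norm_le_of_frequently
    (hrefl : Function.Surjective (inclusionInDoubleDual 𝕜 E))
    {j : E →L[𝕜] F} (hj : Function.Injective j) {u : α → F} {y : F} {M : ℝ}
    (hu : ∃ᶠ s in L, ∃ v : E, j v = u s ∧ ‖v‖ ≤ M)
    (hy : ∀ φ : StrongDual 𝕜 F, Tendsto (fun s => φ (u s)) L (𝓝 (φ y))) :
    ∃ v : E, j v = y ∧ ‖v‖ ≤ M := by
  set L' := L ⊓ 𝓟 {s | ∃ v : E, j v = u s ∧ ‖v‖ ≤ M}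
  have : L'.NeBot := frequently_iff_neBot.1 hu
  have hL' : ∀ᶠ s in L', ∃ v : E, j v = u s ∧ ‖v‖ ≤ M := mem_inf_of_right (mem_principal_self _)
  choose! v hvu hvM using fun s (hs : ∃ v : E, j v = u s ∧ ‖v‖ ≤ M) => hs
  have hjv : ∀ φ : StrongDual 𝕜 F, Tendsto (fun s => φ (j (v s))) L' (𝓝 (φ y)) := fun φ =>
    ((hy φ).mono_left inf_le_left).congr' (hL'.mono fun s hs => congrArg φ (hvu s hs).symm)
  obtain ⟨v₀, hv₀M, hv₀⟩ := exists_tendsto_weak_of_eventually_norm_le hrefl hj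
    (hL'.mono fun s hs => hvM s hs) fun φ => ⟨_, hjv φ⟩
  exact ⟨v₀, apply_eq_of_tendsto_weak j hv₀ hjv, hv₀M⟩

end Reflexive

theorem frequently_nhdsGT_of_ae_restrict_Icc {a b t : ℝ} (hat : a ≤ t) (htb : t < b)
    {p : ℝ → Prop} (hp : ∀ᵐ s ∂volume.restrict (Icc a b), p s) : ∃ᶠ s in 𝓝[>] t, p s := by
  rw [(nhdsGT_basis t).frequently_iff]
  intro c htc
  have hsub : Ioo t (min c b) ⊆ Icc a b :=
    fun s hs => ⟨hat.trans hs.1.le, hs.2.le.trans (min_le_right _ _)⟩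
  have : (ae (volume.restrict (Ioo t (min c b)))).NeBot :=
    ae_restrict_neBot.2 (by simp [htc, htb])
  obtain ⟨s, hs, hps⟩ :=
    ((ae_restrict_mem measurableSet_Ioo).and (ae_restrict_of_ae_restrict_of_subset hsub hp)).exists
  exact ⟨s, ⟨hs.1, hs.2.trans_le (min_le_left _ _)⟩, hps⟩

theorem stmt_2_general
    {E F : Type*}
    [NormedAddCommGroup E] [NormedSpace ℝ E]
    [NormedAddCommGroup F] [NormedSpace ℝ F]
    (hrefl : Function.Surjective (NormedSpace.inclusionInDoubleDual ℝ E))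
    (j : E →L[ℝ] F) (hj_inj : Function.Injective j)
    (T : ℝ)
    (u : ℝ → F)
    -- `u` is weakly càdlàg with values in `F`
    (hcadF : ∀ φ : F →L[ℝ] ℝ,
      (∀ t ∈ Set.Ico (0 : ℝ) T, Tendsto (fun s => φ (u s))
          (𝓝[Set.Ioc t T] t) (𝓝 (φ (u t)))) ∧
      (∀ t ∈ Set.Ioc (0 : ℝ) T, ∃ l : ℝ, Tendsto (fun s => φ (u s))
          (𝓝[Set.Ico 0 t] t) (𝓝 l)))
    -- `u ∈ L^∞(0,T;E)`
    (M : ℝ)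
    (hbd : ∀ᵐ t ∂(volume.restrict (Set.Icc (0 : ℝ) T)), ∃ v : E, j v = u t ∧ ‖v‖ ≤ M)
    -- the value at `T` lies in `E`
    (huT : ∃ v : E, j v = u T) :
    ∃ (w : ℝ → E) (M' : ℝ),
      (∀ t ∈ Set.Icc (0 : ℝ) T, j (w t) = u t) ∧
      (∀ t ∈ Set.Icc (0 : ℝ) T, ‖w t‖ ≤ M') ∧
      (∀ t ∈ Set.Ico (0 : ℝ) T, ∀ ψ : E →L[ℝ] ℝ,
        Tendsto (fun s => ψ (w s)) (𝓝[Set.Ioc t T] t) (𝓝 (ψ (w t)))) ∧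
      (∀ t ∈ Set.Ioc (0 : ℝ) T, ∃ l : E, ∀ ψ : E →L[ℝ] ℝ,
        Tendsto (fun s => ψ (w s)) (𝓝[Set.Ico 0 t] t) (𝓝 (ψ l))) := by
  have hbelowT : ∀ t ∈ Ico (0 : ℝ) T, ∃ v : E, j v = u t ∧ ‖v‖ ≤ M := fun t ht =>
    exists_apply_eq_norm_le_of_frequently hrefl hj_inj
      (frequently_nhdsGT_of_ae_restrict_Icc ht.1 ht.2 hbd)
      fun φ => nhdsWithin_Ioc_eq_nhdsGT ht.2 ▸ (hcadF φ).1 t ht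
  obtain ⟨vT, hvT⟩ := huT
  have hIcc : ∀ t ∈ Icc (0 : ℝ) T, ∃ v : E, j v = u t ∧ ‖v‖ ≤ max M ‖vT‖ := by
    rintro t ⟨ht0, htT⟩
    rcases htT.lt_or_eq with htT | rfl
    · obtain ⟨v, hvu, hvM⟩ := hbelowT t ⟨ht0, htT⟩
      exact ⟨v, hvu, hvM.trans (le_max_left _ _)⟩
    · exact ⟨vT, hvT, le_max_right _ _⟩
  choose! w hwu hwM using hIcc
  have hcongr : ∀ {L : Filter ℝ}, (∀ᶠ s in L, s ∈ Icc (0 : ℝ) T) → ∀ φ : F →L[ℝ] ℝ,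
      (fun s => φ (u s)) =ᶠ[L] fun s => φ (j (w s)) :=
    fun hL φ => hL.mono fun s hs => congrArg φ (hwu s hs).symm
  refine ⟨w, max M ‖vT‖, hwu, hwM, fun t ht ψ => ?_, fun t ht => ?_⟩
  · have := left_nhdsWithin_Ioc_neBot ht.2
    have hL : ∀ᶠ s in 𝓝[Ioc t T] t, s ∈ Icc (0 : ℝ) T :=
      eventually_mem_nhdsWithin.mono fun s hs => ⟨ht.1.trans hs.1.le, hs.2⟩
    refine tendsto_weak_of_tendsto_comp hrefl hj_inj (hL.mono hwM) (fun φ => ?_) ψ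
    rw [hwu t (Ico_subset_Icc_self ht)]
    exact ((hcadF φ).1 t ht).congr' (hcongr hL φ)
  · have := right_nhdsWithin_Ico_neBot ht.1
    have hL : ∀ᶠ s in 𝓝[Ico 0 t] t, s ∈ Icc (0 : ℝ) T :=
      eventually_mem_nhdsWithin.mono fun s hs => ⟨hs.1, hs.2.le.trans ht.2⟩
    obtain ⟨l, -, hl⟩ := exists_tendsto_weak_of_eventually_norm_le hrefl hj_inj (hL.mono hwM)
      fun φ => ((hcadF φ).2 t ht).imp fun _ hc => hc.congr' (hcongr hL φ)
    exact ⟨l, hl⟩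

/-- `L^∞(0,T;E) ∩ D_w([0,T];F) = D_w([0,T];E)`: a function `u : [0,T] → F`
that is weakly càdlàg in `F`, essentially bounded with values in `E`, and with `u T ∈ E`,
takes values in `E` on all of `[0,T]`, is weakly càdlàg with values in `E`, and its range
is bounded in `E`. Reflexivity of `E` is encoded as surjectivity of the canonical
inclusion into the double dual. -/
theorem stmt_2
    {E F : Type*}
    [NormedAddCommGroup E] [NormedSpace ℝ E]
    [NormedAddCommGroup F] [NormedSpace ℝ F]
    (hrefl : Function.Surjective (NormedSpace.inclusionInDoubleDual ℝ E))
    (j : E →L[ℝ] F) (hj_inj : Function.Injective j) (hj_dense : DenseRange j)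
    (T : ℝ) (hT : 0 < T)
    (u : ℝ → F)
    -- `u` is weakly càdlàg with values in `F`
    (hcadF : ∀ φ : F →L[ℝ] ℝ,
      (∀ t ∈ Set.Ico (0 : ℝ) T, Tendsto (fun s => φ (u s))
          (𝓝[Set.Ioc t T] t) (𝓝 (φ (u t)))) ∧
      (∀ t ∈ Set.Ioc (0 : ℝ) T, ∃ l : ℝ, Tendsto (fun s => φ (u s))
          (𝓝[Set.Ico 0 t] t) (𝓝 l)))
    -- `u ∈ L^∞(0,T;E)`
    (M : ℝ)
    (hbd : ∀ᵐ t ∂(volume.restrict (Set.Icc (0 : ℝ) T)), ∃ v : E, j v = u t ∧ ‖v‖ ≤ M)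
    -- the value at `T` lies in `E`
    (huT : ∃ v : E, j v = u T) :
    ∃ (w : ℝ → E) (M' : ℝ),
      (∀ t ∈ Set.Icc (0 : ℝ) T, j (w t) = u t) ∧
      (∀ t ∈ Set.Icc (0 : ℝ) T, ‖w t‖ ≤ M') ∧
      (∀ t ∈ Set.Ico (0 : ℝ) T, ∀ ψ : E →L[ℝ] ℝ,
        Tendsto (fun s => ψ (w s)) (𝓝[Set.Ioc t T] t) (𝓝 (ψ (w t)))) ∧
      (∀ t ∈ Set.Ioc (0 : ℝ) T, ∃ l : E, ∀ ψ : E →L[ℝ] ℝ,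
        Tendsto (fun s => ψ (w s)) (𝓝[Set.Ico 0 t] t) (𝓝 (ψ l))) :=
  stmt_2_general hrefl j hj_inj T u hcadF M hbd huT
end
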